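/- Let (μ_k) be a sequence of finite signed Radon measures on R^N converging weakly to a finite signed measure μ, and suppose the total variation measures |μ_k| converge weakly to a finite Radon measure ν. If B is a Borel set with compact closure such that ν(∂B) = 0, then μ_k(B) → μ(B). -/

import Mathlib

/-!
Given `ε > 0`, take compact `K ⊆ M ⊆ int B` with `K ⊆ int M` and `ν (int B \ K)` small, and a
Urysohn function `g` equal to `1` on `M` and vanishing off `int B`. Then `|1_B - g|` is carried
by the compact set `closure B \ int M ⊆ ∂B ∪ (int B \ K)`, whose `ν`-measure is small because
`ν (∂B) = 0`; a Urysohn function `h` for a small open neighbourhood of it dominates `|1_B - g|`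
and has `∫ h dν < ε`. Hence `|μₖ(B) - ∫ g dμₖ| ≤ ∫ h d|μₖ| → ∫ h dν`, while `∫ g dμₖ → ∫ g dμ`.

For the limit measure one needs `|μ| ≤ ν`: passing to the limit gives `|∫ f dμ| ≤ ∫ |f| dν`
for continuous compactly supported `f`, and density of such `f` in `L¹(|μ| + ν)` upgrades
this to `|μ(A)| ≤ ν(A)` on Borel sets.
-/

open MeasureTheory Filter

/-- Integral of a function against a signed measure, via its Jordan decomposition. -/
noncomputable def sIntegral {N : ℕ} (μ : SignedMeasure (EuclideanSpace ℝ (Fin N)))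
    (f : EuclideanSpace ℝ (Fin N) → ℝ) : ℝ :=
  (∫ y, f y ∂μ.toJordanDecomposition.posPart) - ∫ y, f y ∂μ.toJordanDecomposition.negPart

open Set Topology

section JordanDecomposition

variable {α : Type*} [MeasurableSpace α]

theorem integrable_indicator_one (μ : Measure α) [IsFiniteMeasure μ] {A : Set α}
    (hA : MeasurableSet A) : Integrable (A.indicator (1 : α → ℝ)) μ :=
  (integrable_const 1).indicator hA

theorem abs_integral_sub_integral_le_integral_abs_add {p n : Measure α} {f : α → ℝ}
    (hp : Integrable f p) (hn : Integrable f n) :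
    |∫ x, f x ∂p - ∫ x, f x ∂n| ≤ ∫ x, |f x| ∂(p + n) := by
  rw [integral_add_measure hp.abs hn.abs]
  exact (abs_sub _ _).trans (add_le_add abs_integral_le_integral_abs abs_integral_le_integral_abs)

namespace MeasureTheory.SignedMeasure

variable {s : SignedMeasure α} {f : α → ℝ}

theorem integrable_posPart_of_integrable_totalVariation (hf : Integrable f s.totalVariation) :
    Integrable f s.toJordanDecomposition.posPart :=
  hf.mono_measure (Measure.le_add_right le_rfl)

theorem integrable_negPart_of_integrable_totalVariation (hf : Integrable f s.totalVariation) :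
    Integrable f s.toJordanDecomposition.negPart :=
  hf.mono_measure (Measure.le_add_left le_rfl)

end MeasureTheory.SignedMeasure

end JordanDecomposition

section Approximation

variable {α : Type*} [TopologicalSpace α] [T2Space α] [LocallyCompactSpace α]
  [MeasurableSpace α] [BorelSpace α]

theorem exists_continuous_abs_indicator_sub_le_of_measure_frontier_eq_zero
    (ν : Measure α) [IsFiniteMeasure ν] [ν.Regular] {B : Set α} (hB : IsCompact (closure B))
    (hν : ν (frontier B) = 0) {ε : ℝ} (hε : 0 < ε) :
    ∃ g h : α → ℝ, Continuous g ∧ HasCompactSupport g ∧ Continuous h ∧ HasCompactSupport h ∧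
      (∀ x, |B.indicator 1 x - g x| ≤ h x) ∧ ∫ x, h x ∂ν < ε := by
  obtain ⟨K, hKB, hK, hνK⟩ := measurableSet_interior.exists_isCompact_sdiff_lt
    (measure_ne_top ν (interior B)) (ENNReal.ofReal_pos.2 hε).ne'
  obtain ⟨M, hM, hKM, hMB⟩ := exists_compact_between hK isOpen_interior hKB
  obtain ⟨g, hg1, hg0, hgs, hg01⟩ := exists_continuous_one_zero_of_isCompact hM
    isOpen_interior.isClosed_compl (disjoint_compl_right_iff_subset.2 hMB)
  have hCB : closure B \ interior M ⊆ frontier B ∪ (interior B \ K) := by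
    rintro x ⟨hxB, hxM⟩
    rw [closure_eq_interior_union_frontier] at hxB
    rcases hxB with hxB | hxB
    · exact Or.inr ⟨hxB, fun hxK => hxM (hKM hxK)⟩
    · exact Or.inl hxB
  have hνC : ν (closure B \ interior M) < ENNReal.ofReal ε :=
    calc ν (closure B \ interior M) ≤ ν (frontier B) + ν (interior B \ K) :=
          (measure_mono hCB).trans (measure_union_le _ _)
      _ < ENNReal.ofReal ε := by rwa [hν, zero_add]
  obtain ⟨V, hCV, hV, hνV⟩ := (closure B \ interior M).exists_isOpen_lt_of_lt _ hνC
  obtain ⟨h, hh1, hh0, hhs, hh01⟩ := exists_continuous_one_zero_of_isCompact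
    (hB.diff isOpen_interior) hV.isClosed_compl (disjoint_compl_right_iff_subset.2 hCV)
  refine ⟨g, h, g.continuous, hgs, h.continuous, hhs, fun x => ?_, ?_⟩
  · by_cases hxM : x ∈ interior M
    · have hxB : x ∈ B := interior_subset (hMB (interior_subset hxM))
      rw [indicator_of_mem hxB, hg1 (interior_subset hxM)]
      simpa using (hh01 x).1
    by_cases hxB : x ∈ closure B
    · rw [hh1 ⟨hxB, hxM⟩]
      refine abs_sub_le_of_nonneg_of_le ?_ ?_ (hg01 x).1 (hg01 x).2 <;>
        by_cases hx : x ∈ B <;> simp [hx]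
    · have hxB' : x ∉ B := fun hx => hxB (subset_closure hx)
      rw [indicator_of_notMem hxB', hg0 fun hx => hxB' (interior_subset hx)]
      simpa using (hh01 x).1
  · have hhV : ∀ x, h x ≤ V.indicator 1 x := fun x => by
      by_cases hx : x ∈ V
      · simpa [hx] using (hh01 x).2
      · simp [hx, hh0 hx]
    calc ∫ x, h x ∂ν ≤ ∫ x, V.indicator 1 x ∂ν :=
          integral_mono (h.continuous.integrable_of_hasCompactSupport hhs)
            (integrable_indicator_one ν hV.measurableSet) hhV
      _ = ν.real V := integral_indicator_one hV.measurableSet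
      _ < ε := ENNReal.toReal_lt_of_lt_ofReal hνV

end Approximation

section SignedIntegral

open SignedMeasure

variable {N : ℕ}

local notation "E" => EuclideanSpace ℝ (Fin N)

theorem sIntegral_sub {s : SignedMeasure E} {f g : E → ℝ} (hf : Integrable f s.totalVariation)
    (hg : Integrable g s.totalVariation) :
    sIntegral s (fun x => f x - g x) = sIntegral s f - sIntegral s g := by
  simp only [sIntegral]
  rw [integral_sub (integrable_posPart_of_integrable_totalVariation hf)
      (integrable_posPart_of_integrable_totalVariation hg),
    integral_sub (integrable_negPart_of_integrable_totalVariation hf)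
      (integrable_negPart_of_integrable_totalVariation hg)]
  ring

theorem sIntegral_indicator_one (s : SignedMeasure E) {A : Set E} (hA : MeasurableSet A) :
    sIntegral s (A.indicator 1) = s A := by
  rw [sIntegral, integral_indicator_one hA, integral_indicator_one hA,
    s.apply_eq_posPart_real_sub_negPart_real hA]

theorem abs_sIntegral_le {s : SignedMeasure E} {f : E → ℝ} (hf : Integrable f s.totalVariation) :
    |sIntegral s f| ≤ ∫ x, |f x| ∂s.totalVariation :=
  abs_integral_sub_integral_le_integral_abs_add
    (integrable_posPart_of_integrable_totalVariation hf)
    (integrable_negPart_of_integrable_totalVariation hf)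

theorem abs_apply_sub_sIntegral_le (s : SignedMeasure E) {A : Set E} (hA : MeasurableSet A)
    {g h : E → ℝ} (hg : Integrable g s.totalVariation) (hh : Integrable h s.totalVariation)
    (hdom : ∀ x, |A.indicator 1 x - g x| ≤ h x) :
    |s A - sIntegral s g| ≤ ∫ x, h x ∂s.totalVariation := by
  have hA1 := integrable_indicator_one s.totalVariation hA
  rw [← sIntegral_indicator_one s hA, ← sIntegral_sub hA1 hg]
  exact (abs_sIntegral_le (hA1.sub hg)).trans (integral_mono (hA1.sub hg).abs hh hdom)

theorem abs_sIntegral_le_of_tendsto {ι : Type*} {l : Filter ι} [l.NeBot]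
    {μk : ι → SignedMeasure E} {μ : SignedMeasure E} {ν : Measure E} {f : E → ℝ}
    (hf : ∀ i, Integrable f (μk i).totalVariation)
    (hweak : Tendsto (fun i => sIntegral (μk i) f) l (𝓝 (sIntegral μ f)))
    (hTV : Tendsto (fun i => ∫ x, |f x| ∂(μk i).totalVariation) l (𝓝 (∫ x, |f x| ∂ν))) :
    |sIntegral μ f| ≤ ∫ x, |f x| ∂ν :=
  le_of_tendsto_of_tendsto' hweak.abs hTV fun i => abs_sIntegral_le (hf i)

theorem abs_apply_le_of_abs_sIntegral_le (μ : SignedMeasure E) (ν : Measure E) [IsFiniteMeasure ν]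
    (hμν : ∀ f : E → ℝ, Continuous f → HasCompactSupport f → |sIntegral μ f| ≤ ∫ x, |f x| ∂ν)
    {A : Set E} (hA : MeasurableSet A) : |μ A| ≤ ν.real A := by
  refine le_of_forall_pos_le_add fun ε hε => ?_
  have hμρ : μ.totalVariation ≤ μ.totalVariation + ν := Measure.le_add_right le_rfl
  have hνρ : ν ≤ μ.totalVariation + ν := Measure.le_add_left le_rfl
  have hA1 := integrable_indicator_one (μ.totalVariation + ν) hA
  obtain ⟨g, hgs, hgA, hg, hgi⟩ := hA1.exists_hasCompactSupport_integral_sub_le hε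
  simp only [Real.norm_eq_abs] at hgA
  have hd : Integrable (fun x => |A.indicator 1 x - g x|) (μ.totalVariation + ν) :=
    (hA1.sub hgi).abs
  have hsplit := integral_add_measure (hd.mono_measure hμρ) (hd.mono_measure hνρ)
  have hμA : |μ A - sIntegral μ g| ≤ ∫ x, |A.indicator 1 x - g x| ∂μ.totalVariation :=
    abs_apply_sub_sIntegral_le μ hA (hgi.mono_measure hμρ) (hd.mono_measure hμρ) fun _ => le_rfl
  have hνg : ∫ x, |g x| ∂ν ≤ ∫ x, |A.indicator 1 x - g x| ∂ν + ν.real A := by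
    rw [← integral_indicator_one hA,
      ← integral_add (hd.mono_measure hνρ) (hA1.mono_measure hνρ)]
    refine integral_mono (hgi.mono_measure hνρ).abs
      ((hd.mono_measure hνρ).add (hA1.mono_measure hνρ)) fun x => ?_
    have h01 : 0 ≤ A.indicator (1 : E → ℝ) x := by by_cases hx : x ∈ A <;> simp [hx]
    calc |g x| = |A.indicator 1 x - (A.indicator 1 x - g x)| := by ring_nf
      _ ≤ |A.indicator 1 x| + |A.indicator 1 x - g x| := abs_sub _ _
      _ = |A.indicator 1 x - g x| + A.indicator 1 x := by rw [abs_of_nonneg h01, add_comm]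
  linarith [abs_sub_abs_le_abs_sub (μ A) (sIntegral μ g), hμν g hg hgs]

theorem totalVariation_le_of_abs_sIntegral_le (μ : SignedMeasure E) (ν : Measure E)
    [IsFiniteMeasure ν]
    (hμν : ∀ f : E → ℝ, Continuous f → HasCompactSupport f → |sIntegral μ f| ≤ ∫ x, |f x| ∂ν) :
    μ.totalVariation ≤ ν := by
  rw [totalVariation_eq_variation]
  refine VectorMeasure.variation_le_of_forall_enorm_le fun A hA => ?_
  rw [Real.enorm_eq_ofReal_abs]
  exact ENNReal.ofReal_le_of_le_toReal (abs_apply_le_of_abs_sIntegral_le μ ν hμν hA)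

end SignedIntegral

/-- Weak convergence of signed measures plus weak convergence of total variations
implies convergence on Borel sets whose boundary is null for the limit variation. -/
theorem stmt2 {N : ℕ} (μk : ℕ → SignedMeasure (EuclideanSpace ℝ (Fin N)))
    (μ : SignedMeasure (EuclideanSpace ℝ (Fin N)))
    (ν : Measure (EuclideanSpace ℝ (Fin N))) [IsFiniteMeasure ν]
    (hweak : ∀ f : EuclideanSpace ℝ (Fin N) → ℝ, Continuous f → HasCompactSupport f →
      Tendsto (fun k => sIntegral (μk k) f) atTop (nhds (sIntegral μ f)))
    (hTV : ∀ f : EuclideanSpace ℝ (Fin N) → ℝ, Continuous f → HasCompactSupport f →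
      Tendsto (fun k => ∫ y, f y ∂(μk k).totalVariation) atTop (nhds (∫ y, f y ∂ν)))
    (B : Set (EuclideanSpace ℝ (Fin N))) (hB : MeasurableSet B)
    (hBc : IsCompact (closure B)) (hν : ν (frontier B) = 0) :
    Tendsto (fun k => μk k B) atTop (nhds (μ B)) := by
  have hμν : μ.totalVariation ≤ ν := totalVariation_le_of_abs_sIntegral_le μ ν fun f hf hfs =>
    abs_sIntegral_le_of_tendsto (fun _ => hf.integrable_of_hasCompactSupport hfs)
      (hweak f hf hfs) (hTV _ hf.abs hfs.abs)
  rw [Metric.tendsto_nhds]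
  intro ε hε
  obtain ⟨g, h, hg, hgs, hh, hhs, hdom, hhν⟩ :=
    exists_continuous_abs_indicator_sub_le_of_measure_frontier_eq_zero ν hBc hν
      (div_pos hε three_pos)
  have hest : ∀ s : SignedMeasure (EuclideanSpace ℝ (Fin N)),
      |s B - sIntegral s g| ≤ ∫ x, h x ∂s.totalVariation := fun s =>
    abs_apply_sub_sIntegral_le s hB (hg.integrable_of_hasCompactSupport hgs)
      (hh.integrable_of_hasCompactSupport hhs) hdom
  have hμB : ∫ x, h x ∂μ.totalVariation ≤ ∫ x, h x ∂ν :=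
    integral_mono_measure hμν (Eventually.of_forall fun x => (abs_nonneg _).trans (hdom x))
      (hh.integrable_of_hasCompactSupport hhs)
  filter_upwards [(hTV h hh hhs).eventually_lt_const hhν,
    Metric.tendsto_nhds.1 (hweak g hg hgs) (ε / 3) (div_pos hε three_pos)] with k hk hkg
  rw [Real.dist_eq] at hkg ⊢
  linarith [abs_sub_le (μk k B) (sIntegral (μk k) g) (μ B),
    abs_sub_le (sIntegral (μk k) g) (sIntegral μ g) (μ B), abs_sub_comm (sIntegral μ g) (μ B),
    hest (μk k), hest μ]
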